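/- For all integer partitions μ ⊆ λ with n = |λ| − |μ| ≥ 1 and every permutation δ of {1, …, n}, ρ(s_{(δ, λ/μ)}) = s_{λ/μ} in MvPolynomial (Fin N) ℚ. -/

import Mathlib

open scoped BigOperators Classical

noncomputable section

namespace NCSymPaper

/-- `π` is a set partition of `{0, …, n-1}` (representing `[n] = {1, …, n}`):
its blocks are nonempty and every element lies in exactly one block. -/
def IsSetPartition {n : ℕ} (π : Finset (Finset (Fin n))) : Prop :=
  (∀ B ∈ π, B.Nonempty) ∧ ∀ j : Fin n, ∃! B, B ∈ π ∧ j ∈ B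

/-- `j` and `k` lie in a common block of `π`. -/
def sameBlock {n : ℕ} (π : Finset (Finset (Fin n))) (j k : Fin n) : Prop :=
  ∃ B ∈ π, j ∈ B ∧ k ∈ B

/-- The noncommutative monomial `x_{f 1} x_{f 2} ⋯ x_{f n}` in `FreeAlgebra ℚ (Fin N)`. -/
def ncMonomial {N n : ℕ} (f : Fin n → Fin N) : FreeAlgebra ℚ (Fin N) :=
  (List.ofFn fun j => FreeAlgebra.ι ℚ (f j)).prod

/-- `η` maps every block of `π` to itself. -/
def fixesBlocks {n : ℕ} (π : Finset (Finset (Fin n))) (η : Equiv.Perm (Fin n)) : Prop :=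
  ∀ B ∈ π, ∀ j ∈ B, η j ∈ B

/-- The complete homogeneous symmetric function in noncommuting variables `h_π`. -/
def hNC (N : ℕ) {n : ℕ} (π : Finset (Finset (Fin n))) : FreeAlgebra ℚ (Fin N) :=
  ∑ η ∈ Finset.univ.filter (fixesBlocks π),
    ∑ f ∈ Finset.univ.filter (fun f : Fin n → Fin N =>
        ∀ j k : Fin n, j < k → sameBlock π j k → f j ≤ f k),
      ncMonomial fun j => f (η j)

/-- The monomial symmetric function in noncommuting variables `m_σ`. -/
def mNC (N : ℕ) {n : ℕ} (σ : Finset (Finset (Fin n))) : FreeAlgebra ℚ (Fin N) :=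
  ∑ f ∈ Finset.univ.filter (fun f : Fin n → Fin N =>
      ∀ j k : Fin n, f j = f k ↔ sameBlock σ j k),
    ncMonomial f

/-- The elementary symmetric function in noncommuting variables `e_π`. -/
def eNC (N : ℕ) {n : ℕ} (π : Finset (Finset (Fin n))) : FreeAlgebra ℚ (Fin N) :=
  ∑ f ∈ Finset.univ.filter (fun f : Fin n → Fin N =>
      ∀ j k : Fin n, j ≠ k → sameBlock π j k → f j ≠ f k),
    ncMonomial f

/-- `lam` is an integer partition (weakly decreasing list of positive integers). -/
def IsPartitionList (lam : List ℕ) : Prop :=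
  List.Pairwise (· ≥ ·) lam ∧ ∀ x ∈ lam, 0 < x

/-- The entry `β(ε)_i = λ_i − μ_{ε(i)} + ε(i) − i` (0-indexed; `μ_j = 0` beyond `ℓ(μ)`). -/
def betaInt (lam mu : List ℕ) (ε : Equiv.Perm (Fin lam.length)) (i : Fin lam.length) : ℤ :=
  (lam.get i : ℤ) - (mu.getD (ε i : ℕ) 0 : ℤ) + ((ε i : ℕ) : ℤ) - ((i : ℕ) : ℤ)

/-- The set partition of `[n]` into consecutive intervals of sizes `b 0, b 1, …`
(sizes equal to `0` contribute no block). -/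
def intervalBlocks (n : ℕ) {l : ℕ} (b : Fin l → ℕ) : Finset (Finset (Fin n)) :=
  ((Finset.univ : Finset (Fin l)).image fun i =>
      (Finset.univ : Finset (Fin n)).filter fun k : Fin n =>
        (∑ j ∈ Finset.univ.filter fun j => j < i, b j) ≤ (k : ℕ) ∧
          (k : ℕ) < (∑ j ∈ Finset.univ.filter fun j => j < i, b j) + b i).filter
    fun B => B.Nonempty

/-- The image of a set partition under a map `δ` (blockwise image). -/
def applyMap {n : ℕ} (δ : Fin n → Fin n) (π : Finset (Finset (Fin n))) :
    Finset (Finset (Fin n)) :=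
  π.image fun B => B.image δ

/-- The skew Schur function in noncommuting variables
`s_{(δ, λ/μ)} = Σ_ε sgn(ε) (1/β(ε)!) h_{δ[β(ε)]}`, the summand being `0`
whenever some entry of `β(ε)` is negative. -/
def sNC (N n : ℕ) (δ : Fin n → Fin n) (lam mu : List ℕ) : FreeAlgebra ℚ (Fin N) :=
  ∑ ε : Equiv.Perm (Fin lam.length),
    if ∀ i, 0 ≤ betaInt lam mu ε i then
      (((Equiv.Perm.sign ε : ℤ) : ℚ) *
          ∏ i, 1 / ((betaInt lam mu ε i).toNat.factorial : ℚ)) •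
        hNC N (applyMap δ (intervalBlocks n fun i => (betaInt lam mu ε i).toNat))
    else 0

/-- Analogue of `sNC` with `e`'s in place of `h`'s (used for transposed Schur functions). -/
def sNCe (N n : ℕ) (δ : Fin n → Fin n) (lam mu : List ℕ) : FreeAlgebra ℚ (Fin N) :=
  ∑ ε : Equiv.Perm (Fin lam.length),
    if ∀ i, 0 ≤ betaInt lam mu ε i then
      (((Equiv.Perm.sign ε : ℤ) : ℚ) *
          ∏ i, 1 / ((betaInt lam mu ε i).toNat.factorial : ℚ)) •
        eNC N (applyMap δ (intervalBlocks n fun i => (betaInt lam mu ε i).toNat))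
    else 0

/-- The projection `ρ` letting the variables commute. -/
def rho (N : ℕ) : FreeAlgebra ℚ (Fin N) →ₐ[ℚ] MvPolynomial (Fin N) ℚ :=
  FreeAlgebra.lift ℚ MvPolynomial.X

/-- The complete homogeneous symmetric polynomial of degree `k` in `N` commuting
variables (`1` for `k = 0`, `0` for `k < 0`). -/
def hPoly (N : ℕ) (k : ℤ) : MvPolynomial (Fin N) ℚ :=
  if 0 ≤ k then
    ∑ f ∈ Finset.univ.filter fun f : Fin k.toNat → Fin N => Monotone f,
      ∏ j, MvPolynomial.X (f j)
  else 0

/-- The skew Schur polynomial `s_{λ/μ} = det(h_{λ_i − μ_j − i + j})`. -/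
def schurPoly (N : ℕ) (lam mu : List ℕ) : MvPolynomial (Fin N) ℚ :=
  Matrix.det (Matrix.of fun i j : Fin lam.length =>
    hPoly N ((lam.get i : ℤ) - (mu.getD (j : ℕ) 0 : ℤ) - ((i : ℕ) : ℤ) + ((j : ℕ) : ℤ)))

/-- Order on blocks: weakly decreasing size, ties broken by increasing least element. -/
def blockLe {n : ℕ} (B C : Finset (Fin n)) : Bool :=
  decide (C.card < B.card ∨ (B.card = C.card ∧ B.min ≤ C.min))

/-- The blocks of `π`, listed in weakly decreasing size with ties broken by
increasing least element. -/
def sortedBlocks {n : ℕ} (π : Finset (Finset (Fin n))) : List (Finset (Fin n)) :=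
  π.toList.mergeSort blockLe

/-- The one-line notation of `δ_π`. -/
def oneLine {n : ℕ} (π : Finset (Finset (Fin n))) : List (Fin n) :=
  ((sortedBlocks π).map fun B => B.sort (· ≤ ·)).flatten

/-- The permutation `δ_π` (as a function). -/
def deltaPi {n : ℕ} (π : Finset (Finset (Fin n))) : Fin n → Fin n :=
  fun i => (oneLine π).getD (i : ℕ) i

/-- `λ(π)`: the weakly decreasing list of block sizes of `π`. -/
def lamOf {n : ℕ} (π : Finset (Finset (Fin n))) : List ℕ :=
  (sortedBlocks π).map Finset.card

/-- The standard Schur function in noncommuting variables `s_π = s_{(δ_π, λ(π))}`. -/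
def sPi (N : ℕ) {n : ℕ} (π : Finset (Finset (Fin n))) : FreeAlgebra ℚ (Fin N) :=
  sNC N n (deltaPi π) (lamOf π) []

/-- The transposed standard Schur function in noncommuting variables `s^t_π`. -/
def sPiT (N : ℕ) {n : ℕ} (π : Finset (Finset (Fin n))) : FreeAlgebra ℚ (Fin N) :=
  sNCe N n (deltaPi π) (lamOf π) []

/-- The transpose of an integer partition: `(λ^t)_i = #{j : λ_j ≥ i}`. -/
def transposeList (lam : List ℕ) : List ℕ :=
  (List.range (lam.foldr max 0)).map fun i => (lam.filter fun x => i + 1 ≤ x).length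

/-- The weakly decreasing list of parts of a `Nat.Partition`. -/
def nuList {n : ℕ} (ν : Nat.Partition n) : List ℕ :=
  (Multiset.sort ν.parts (· ≤ ·)).reverse

/-- The cells of the skew diagram `λ/μ` in reading order (0-indexed pairs (row, column)). -/
def cellL (lam mu : List ℕ) : List (ℕ × ℕ) :=
  (List.range lam.length).flatMap fun i =>
    ((List.range (lam.getD i 0)).drop (mu.getD i 0)).map fun j => (i, j)

/-- The `a`-th cell of `λ/μ` in reading order. -/
def cellOf (lam mu : List ℕ) (a : ℕ) : ℕ × ℕ :=
  (cellL lam mu).getD a (0, 0)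

/-- `T` (a filling of the cells of `λ/μ`, listed in reading order) is a semistandard
Young tableau: rows weakly increase left to right, columns strictly increase
top to bottom. -/
def IsSSYT {N n : ℕ} (lam mu : List ℕ) (T : Fin n → Fin N) : Prop :=
  ∀ a b : Fin n,
    ((cellOf lam mu a).1 = (cellOf lam mu b).1 ∧
        (cellOf lam mu b).2 = (cellOf lam mu a).2 + 1 → T a ≤ T b) ∧
    ((cellOf lam mu b).1 = (cellOf lam mu a).1 + 1 ∧
        (cellOf lam mu b).2 = (cellOf lam mu a).2 → T a < T b)

/-- The Rosas–Sagan skew Schur function `S_{λ/μ}`. -/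
def RSschur (N n : ℕ) (lam mu : List ℕ) : FreeAlgebra ℚ (Fin N) :=
  ∑ δ : Equiv.Perm (Fin n),
    ∑ T ∈ Finset.univ.filter fun T : Fin n → Fin N => IsSSYT lam mu T,
      ncMonomial fun k => T (δ k)

/-- The Kostka number `K_ν^{λ/μ}`: the number of semistandard Young tableaux of shape
`λ/μ` in which the entry `i` occurs exactly `ν_i` times (all entries of such a
tableau necessarily lie in `{1, …, n}` where `n = |λ/μ|`). -/
def kostka (n : ℕ) (lam mu nu : List ℕ) : ℕ :=
  (Finset.univ.filter fun T : Fin n → Fin n =>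
      IsSSYT lam mu T ∧
        ∀ i : Fin n, (Finset.univ.filter fun a : Fin n => T a = i).card = nu.getD (i : ℕ) 0).card


/-! ### Auxiliary development -/

section Aux

/-- Partial sums of block sizes. -/
def sPartial {l : ℕ} (b : Fin l → ℕ) (i : Fin l) : ℕ :=
  ∑ j ∈ Finset.univ.filter fun j => j < i, b j

lemma sPartial_add_le {l : ℕ} (b : Fin l → ℕ) (i : Fin l) :
    sPartial b i + b i ≤ ∑ j, b j := by
  classical
  have h2 : i ∉ Finset.univ.filter fun j => j < i := by simp
  calc sPartial b i + b i = ∑ j ∈ insert i (Finset.univ.filter fun j => j < i), b j := by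
        rw [Finset.sum_insert h2, add_comm]; rfl
    _ ≤ ∑ j, b j := Finset.sum_le_sum_of_subset (Finset.subset_univ _)

lemma sPartial_gap {l : ℕ} (b : Fin l → ℕ) {i i' : Fin l} (h : i < i') :
    sPartial b i + b i ≤ sPartial b i' := by
  classical
  have h2 : i ∉ Finset.univ.filter fun j => j < i := by simp
  have h1 : insert i (Finset.univ.filter fun j => j < i)
      ⊆ Finset.univ.filter fun j => j < i' := by
    intro j hj
    simp only [Finset.mem_insert, Finset.mem_filter, Finset.mem_univ, true_and] at hj ⊢
    rcases hj with rfl | hj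
    · exact h
    · exact hj.trans h
  calc sPartial b i + b i = ∑ j ∈ insert i (Finset.univ.filter fun j => j < i), b j := by
        rw [Finset.sum_insert h2, add_comm]; rfl
    _ ≤ sPartial b i' := Finset.sum_le_sum_of_subset h1

lemma sPartial_succ {l : ℕ} (b : Fin l → ℕ) (i i' : Fin l) (h : (i' : ℕ) = (i : ℕ) + 1) :
    sPartial b i' = sPartial b i + b i := by
  classical
  have h2 : i ∉ Finset.univ.filter fun j => j < i := by simp
  have key : (Finset.univ.filter fun j => j < i')
      = insert i (Finset.univ.filter fun j => j < i) := by
    ext j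
    simp only [Finset.mem_filter, Finset.mem_univ, true_and, Finset.mem_insert, Fin.lt_def,
      Fin.ext_iff]
    omega
  rw [sPartial, key, Finset.sum_insert h2, add_comm]; rfl

lemma sPartial_last {l : ℕ} (b : Fin l → ℕ) (i : Fin l) (h : (i : ℕ) + 1 = l) :
    sPartial b i + b i = ∑ j, b j := by
  classical
  have h2 : i ∉ Finset.univ.filter fun j => j < i := by simp
  have key : (Finset.univ : Finset (Fin l))
      = insert i (Finset.univ.filter fun j => j < i) := by
    ext j
    simp only [Finset.mem_univ, Finset.mem_insert, Finset.mem_filter, true_and, true_iff,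
      Fin.lt_def, Fin.ext_iff]
    have := j.isLt
    omega
  rw [key, Finset.sum_insert h2, add_comm]; rfl

/-- The index of the interval block containing `k`. -/
def blockIdx {n l : ℕ} (b : Fin l → ℕ) (hb : ∑ i, b i = n) (k : Fin n) : Fin l :=
  (Finset.univ.filter fun i => sPartial b i ≤ (k : ℕ)).max' (by
    have hl : 0 < l := by
      rcases Nat.eq_zero_or_pos l with hl | hl
      · subst hl
        rw [Finset.univ_eq_empty, Finset.sum_empty] at hb
        have := k.pos
        omega
      · exact hl
    refine ⟨⟨0, hl⟩, ?_⟩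
    simp only [Finset.mem_filter, Finset.mem_univ, true_and]
    have he : (Finset.univ.filter fun j => j < (⟨0, hl⟩ : Fin l)) = ∅ := by
      ext j; simp [Fin.lt_def]
    rw [sPartial, he, Finset.sum_empty]
    exact Nat.zero_le _)

lemma blockIdx_spec {n l : ℕ} (b : Fin l → ℕ) (hb : ∑ i, b i = n) (k : Fin n) :
    sPartial b (blockIdx b hb k) ≤ (k : ℕ) ∧
      (k : ℕ) < sPartial b (blockIdx b hb k) + b (blockIdx b hb k) := by
  classical
  have hmem : blockIdx b hb k ∈ Finset.univ.filter fun i => sPartial b i ≤ (k : ℕ) :=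
    Finset.max'_mem _ _
  have h1 : sPartial b (blockIdx b hb k) ≤ (k : ℕ) := (Finset.mem_filter.mp hmem).2
  refine ⟨h1, ?_⟩
  by_contra hcon
  push_neg at hcon
  rcases lt_or_eq_of_le (Nat.succ_le_of_lt (blockIdx b hb k).isLt) with h2 | h2
  · set i' : Fin l := ⟨(blockIdx b hb k : ℕ) + 1, h2⟩ with hi'
    have hs : sPartial b i' = sPartial b (blockIdx b hb k) + b (blockIdx b hb k) :=
      sPartial_succ b _ i' rfl
    have hmem' : i' ∈ Finset.univ.filter fun i => sPartial b i ≤ (k : ℕ) := by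
      simp only [Finset.mem_filter, Finset.mem_univ, true_and]
      omega
    have hle : i' ≤ blockIdx b hb k := Finset.le_max' _ i' hmem'
    rw [Fin.le_def] at hle
    simp only [hi'] at hle
    omega
  · have hlast := sPartial_last b (blockIdx b hb k) h2
    rw [hb] at hlast
    have := k.isLt
    omega

lemma blockIdx_eq_iff {n l : ℕ} (b : Fin l → ℕ) (hb : ∑ i, b i = n) (k : Fin n) (i : Fin l) :
    blockIdx b hb k = i ↔ sPartial b i ≤ (k : ℕ) ∧ (k : ℕ) < sPartial b i + b i := by
  constructor
  · rintro rfl; exact blockIdx_spec b hb k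
  · rintro ⟨h1, h2⟩
    rcases lt_trichotomy (blockIdx b hb k) i with h | h | h
    · have hg := sPartial_gap b h
      have hs := (blockIdx_spec b hb k).2
      omega
    · exact h
    · have hg := sPartial_gap b h
      have hs := (blockIdx_spec b hb k).1
      omega

lemma card_blockIdx_fiber {n l : ℕ} (b : Fin l → ℕ) (hb : ∑ i, b i = n) (i : Fin l) :
    Fintype.card {k : Fin n // blockIdx b hb k = i} = b i := by
  classical
  have hle := sPartial_add_le b i
  rw [hb] at hle
  have e : {k : Fin n // blockIdx b hb k = i} ≃ Fin (b i) :=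
    { toFun := fun k => ⟨(k.1 : ℕ) - sPartial b i, by
        have h := (blockIdx_eq_iff b hb k.1 i).mp k.2
        omega⟩
      invFun := fun j => ⟨⟨sPartial b i + (j : ℕ), by
          have := j.isLt
          omega⟩, by
        rw [blockIdx_eq_iff]
        have := j.isLt
        constructor
        · exact Nat.le_add_right _ _
        · simp only [Fin.val_mk]
          omega⟩
      left_inv := fun k => by
        have h := (blockIdx_eq_iff b hb k.1 i).mp k.2
        apply Subtype.ext
        apply Fin.ext
        simp only [Fin.val_mk]
        omega
      right_inv := fun j => by
        apply Fin.ext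
        simp only [Fin.val_mk]
        omega }
  rw [Fintype.card_congr e, Fintype.card_fin]

/-- Permutations preserving the fibers of `φ` are products of permutations of the fibers. -/
def permFiberEquiv {α ι : Type*} (φ : α → ι) :
    {η : Equiv.Perm α // ∀ j, φ (η j) = φ j} ≃ ∀ i, Equiv.Perm {j // φ j = i} where
  toFun η i :=
    { toFun := fun j => ⟨η.1 j.1, by rw [η.2]; exact j.2⟩
      invFun := fun j => ⟨η.1.symm j.1, by
        have h := η.2 (η.1.symm j.1)
        rw [Equiv.apply_symm_apply] at h
        rw [← h]; exact j.2⟩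
      left_inv := fun j => Subtype.ext (η.1.symm_apply_apply j.1)
      right_inv := fun j => Subtype.ext (η.1.apply_symm_apply j.1) }
  invFun p :=
    ⟨{ toFun := fun j => (p (φ j) ⟨j, rfl⟩).1
       invFun := fun j => ((p (φ j)).symm ⟨j, rfl⟩).1
       left_inv := fun j => by
         have key : ∀ (i : ι) (x : α) (h : φ x = i),
             ((p (φ x)).symm ⟨x, rfl⟩).1 = ((p i).symm ⟨x, h⟩).1 := by
           rintro i x rfl; rfl
         show ((p (φ ((p (φ j) ⟨j, rfl⟩).1))).symm ⟨(p (φ j) ⟨j, rfl⟩).1, rfl⟩).1 = j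
         rw [key (φ j) _ (p (φ j) ⟨j, rfl⟩).2]
         have h2 : (⟨(p (φ j) ⟨j, rfl⟩).1, (p (φ j) ⟨j, rfl⟩).2⟩ : {x // φ x = φ j})
             = p (φ j) ⟨j, rfl⟩ := rfl
         rw [h2, Equiv.symm_apply_apply]
       right_inv := fun j => by
         have key : ∀ (i : ι) (x : α) (h : φ x = i),
             (p (φ x) ⟨x, rfl⟩).1 = (p i ⟨x, h⟩).1 := by
           rintro i x rfl; rfl
         show (p (φ (((p (φ j)).symm ⟨j, rfl⟩).1)) ⟨((p (φ j)).symm ⟨j, rfl⟩).1, rfl⟩).1 = j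
         rw [key (φ j) _ ((p (φ j)).symm ⟨j, rfl⟩).2]
         have h2 : (⟨((p (φ j)).symm ⟨j, rfl⟩).1, ((p (φ j)).symm ⟨j, rfl⟩).2⟩
             : {x // φ x = φ j}) = (p (φ j)).symm ⟨j, rfl⟩ := rfl
         rw [h2, Equiv.apply_symm_apply] },
      fun j => (p (φ j) ⟨j, rfl⟩).2⟩
  left_inv η := Subtype.ext (Equiv.ext fun j => rfl)
  right_inv p := by
    funext i
    refine Equiv.ext fun x => ?_
    obtain ⟨j, rfl⟩ := x
    rfl

lemma card_fixing_perms {n l : ℕ} (φ : Fin n → Fin l) :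
    (Finset.univ.filter fun η : Equiv.Perm (Fin n) => ∀ j, φ (η j) = φ j).card
      = ∏ i, (Fintype.card {j // φ j = i}).factorial := by
  classical
  rw [← Fintype.card_subtype, Fintype.card_congr (permFiberEquiv φ), Fintype.card_pi]
  exact Finset.prod_congr rfl fun i _ => Fintype.card_perm

lemma sum_monotone_prod (N : ℕ) (α : Type*) [Fintype α] [LinearOrder α] :
    ∑ g ∈ Finset.univ.filter fun g : α → Fin N => Monotone g, ∏ a, MvPolynomial.X (g a)
      = hPoly N (Fintype.card α) := by
  classical
  rw [hPoly, if_pos (by exact_mod_cast Nat.zero_le _)]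
  simp only [Int.toNat_natCast]
  refine Finset.sum_bij' (fun g _ => g ∘ (monoEquivOfFin α rfl))
    (fun f _ => f ∘ (monoEquivOfFin α rfl).symm) ?_ ?_ ?_ ?_ ?_
  · intro g hg
    simp only [Finset.mem_filter, Finset.mem_univ, true_and] at hg ⊢
    exact hg.comp (monoEquivOfFin α rfl).monotone
  · intro f hf
    simp only [Finset.mem_filter, Finset.mem_univ, true_and] at hf ⊢
    exact hf.comp (monoEquivOfFin α rfl).symm.monotone
  · intro g _
    funext a
    simp
  · intro f _
    funext t
    simp
  · intro g _
    exact (Equiv.prod_comp (monoEquivOfFin α rfl).toEquiv fun a => MvPolynomial.X (g a)).symm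

lemma key_pi {n l : ℕ} {β : Type*} (φ : Fin n → Fin l) (p : ∀ i, {j // φ j = i} → β)
    (i : Fin l) (j : Fin n) (h : φ j = i) : p i ⟨j, h⟩ = p (φ j) ⟨j, rfl⟩ := by
  subst h; rfl

set_option maxHeartbeats 1600000 in
lemma sum_blockMonotone (N n l : ℕ) (φ : Fin n → Fin l) :
    ∑ f ∈ Finset.univ.filter (fun f : Fin n → Fin N =>
        ∀ j k : Fin n, j < k → φ j = φ k → f j ≤ f k), ∏ j, MvPolynomial.X (f j)
      = ∏ i, hPoly N (Fintype.card {j // φ j = i}) := by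
  classical
  refine Eq.trans ?_ (Finset.prod_congr rfl fun i _ => sum_monotone_prod N {j // φ j = i})
  refine Eq.trans ?_ (Finset.prod_univ_sum _ _).symm
  refine Finset.sum_bij' (fun f _ => fun i (a : {j // φ j = i}) => f a.1)
    (fun p _ => fun j => p (φ j) ⟨j, rfl⟩) ?_ ?_ ?_ ?_ ?_
  · intro f hf
    simp only [Finset.mem_filter, Finset.mem_univ, true_and] at hf
    rw [Fintype.mem_piFinset]
    intro i
    simp only [Finset.mem_filter, Finset.mem_univ, true_and]
    intro a c hac
    rcases lt_or_eq_of_le hac with hlt | heq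
    · exact hf a.1 c.1 (by exact_mod_cast hlt) (a.2.trans c.2.symm)
    · exact le_of_eq (congrArg f (congrArg Subtype.val heq))
  · intro p hp
    rw [Fintype.mem_piFinset] at hp
    simp only [Finset.mem_filter, Finset.mem_univ, true_and]
    intro j k hjk h
    have hm := hp (φ j)
    simp only [Finset.mem_filter, Finset.mem_univ, true_and] at hm
    rw [← key_pi φ p (φ j) k h.symm]
    exact hm (by exact Subtype.mk_le_mk.mpr (le_of_lt hjk))
  · intro f _
    funext j
    rfl
  · intro p _
    funext i a
    obtain ⟨a, rfl⟩ := a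
    rfl
  · intro f _
    calc ∏ j, MvPolynomial.X (f j)
        = ∏ x : Σ i : Fin l, {j // φ j = i},
            MvPolynomial.X (f ((Equiv.sigmaFiberEquiv φ) x)) :=
          (Equiv.prod_comp (Equiv.sigmaFiberEquiv φ) fun j => MvPolynomial.X (f j)).symm
      _ = ∏ i, ∏ a : {j // φ j = i}, MvPolynomial.X (f a.1) := by
          rw [← Finset.univ_sigma_univ, Finset.prod_sigma]
          rfl

lemma rho_ncMonomial {N n : ℕ} (g : Fin n → Fin N) :
    rho N (ncMonomial g) = ∏ j, MvPolynomial.X (g j) := by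
  rw [rho, ncMonomial, map_list_prod, List.map_ofFn, List.prod_ofFn]
  exact Finset.prod_congr rfl fun i _ => FreeAlgebra.lift_ι_apply _ _

/-- intervals occurring in `intervalBlocks`. -/
def itv (n : ℕ) {l : ℕ} (b : Fin l → ℕ) (i : Fin l) : Finset (Fin n) :=
  (Finset.univ : Finset (Fin n)).filter fun k : Fin n =>
    (∑ j ∈ Finset.univ.filter fun j => j < i, b j) ≤ (k : ℕ) ∧
      (k : ℕ) < (∑ j ∈ Finset.univ.filter fun j => j < i, b j) + b i

lemma intervalBlocks_eq (n : ℕ) {l : ℕ} (b : Fin l → ℕ) :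
    intervalBlocks n b = (Finset.univ.image fun i => itv n b i).filter fun B => B.Nonempty :=
  rfl

lemma mem_itv {n l : ℕ} (b : Fin l → ℕ) (hb : ∑ i, b i = n) (k : Fin n) (i : Fin l) :
    k ∈ itv n b i ↔ blockIdx b hb k = i := by
  rw [itv, Finset.mem_filter, blockIdx_eq_iff b hb]
  simp only [Finset.mem_univ, true_and]
  rfl

lemma rho_hNC (N n l : ℕ) (b : Fin l → ℕ) (hb : ∑ i, b i = n) (δ : Equiv.Perm (Fin n)) :
    rho N (hNC N (applyMap (⇑δ) (intervalBlocks n b)))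
      = (∏ i, (b i).factorial) • ∏ i, hPoly N (b i) := by
  classical
  set π := applyMap (⇑δ) (intervalBlocks n b) with hπ
  set φ : Fin n → Fin l := fun j => blockIdx b hb (δ.symm j) with hφ
  have hmemπ : ∀ B, B ∈ π ↔ ∃ i, (itv n b i).Nonempty ∧ B = (itv n b i).image δ := by
    intro B
    rw [hπ, applyMap, intervalBlocks_eq]
    simp only [Finset.mem_image, Finset.mem_filter]
    constructor
    · rintro ⟨C, ⟨⟨i, -, rfl⟩, hne⟩, rfl⟩
      exact ⟨i, hne, rfl⟩
    · rintro ⟨i, hne, rfl⟩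
      exact ⟨itv n b i, ⟨⟨i, Finset.mem_univ i, rfl⟩, hne⟩, rfl⟩
  have hmemδ : ∀ (i : Fin l) (j : Fin n), j ∈ (itv n b i).image δ ↔ φ j = i := by
    intro i j
    simp only [Finset.mem_image]
    constructor
    · rintro ⟨k, hk, rfl⟩
      show blockIdx b hb (δ.symm (δ k)) = i
      rw [Equiv.symm_apply_apply]
      exact (mem_itv b hb k i).mp hk
    · intro h
      exact ⟨δ.symm j, (mem_itv b hb _ i).mpr h, Equiv.apply_symm_apply δ j⟩
  have hfix : ∀ η : Equiv.Perm (Fin n), fixesBlocks π η ↔ ∀ j, φ (η j) = φ j := by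
    intro η
    constructor
    · intro h j
      have hjmem : j ∈ (itv n b (φ j)).image δ := (hmemδ _ j).mpr rfl
      have hBπ : (itv n b (φ j)).image δ ∈ π := by
        refine (hmemπ _).mpr ⟨φ j, ?_, rfl⟩
        exact ⟨δ.symm j, (mem_itv b hb _ _).mpr rfl⟩
      exact (hmemδ _ (η j)).mp (h _ hBπ j hjmem)
    · intro h B hB j hj
      obtain ⟨i, -, rfl⟩ := (hmemπ B).mp hB
      exact (hmemδ i (η j)).mpr ((h j).trans ((hmemδ i j).mp hj))
  have hsame : ∀ j k, sameBlock π j k ↔ φ j = φ k := by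
    intro j k
    constructor
    · rintro ⟨B, hB, hj, hk⟩
      obtain ⟨i, -, rfl⟩ := (hmemπ B).mp hB
      rw [(hmemδ i j).mp hj, (hmemδ i k).mp hk]
    · intro h
      exact ⟨(itv n b (φ j)).image δ,
        (hmemπ _).mpr ⟨φ j, ⟨δ.symm j, (mem_itv b hb _ _).mpr rfl⟩, rfl⟩,
        (hmemδ _ j).mpr rfl, (hmemδ _ k).mpr h.symm⟩
  have hcard : ∀ i, Fintype.card {j : Fin n // φ j = i} = b i := by
    intro i
    rw [← card_blockIdx_fiber b hb i]
    exact Fintype.card_congr (Equiv.subtypeEquiv δ.symm fun j => Iff.rfl)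
  calc rho N (hNC N π)
      = ∑ η ∈ Finset.univ.filter (fixesBlocks π),
          ∑ f ∈ Finset.univ.filter (fun f : Fin n → Fin N =>
            ∀ j k : Fin n, j < k → sameBlock π j k → f j ≤ f k),
            ∏ j, MvPolynomial.X (f (η j)) := by
        rw [hNC, map_sum]
        refine Finset.sum_congr rfl fun η _ => ?_
        rw [map_sum]
        exact Finset.sum_congr rfl fun f _ => rho_ncMonomial _
    _ = ∑ η ∈ Finset.univ.filter (fixesBlocks π),
          ∑ f ∈ Finset.univ.filter (fun f : Fin n → Fin N =>
            ∀ j k : Fin n, j < k → sameBlock π j k → f j ≤ f k),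
            ∏ j, MvPolynomial.X (f j) :=
        Finset.sum_congr rfl fun η _ => Finset.sum_congr rfl fun f _ =>
          Equiv.prod_comp η fun j => MvPolynomial.X (f j)
    _ = (Finset.univ.filter (fixesBlocks π)).card •
          ∑ f ∈ Finset.univ.filter (fun f : Fin n → Fin N =>
            ∀ j k : Fin n, j < k → sameBlock π j k → f j ≤ f k),
            ∏ j, MvPolynomial.X (f j) := Finset.sum_const _
    _ = (∏ i, (b i).factorial) • ∏ i, hPoly N (b i) := by
        have hc : (Finset.univ.filter (fixesBlocks π)).card = ∏ i, (b i).factorial := by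
          rw [Finset.filter_congr fun η _ => hfix η, card_fixing_perms]
          exact Finset.prod_congr rfl fun i _ => by rw [hcard]
        have hs : ∑ f ∈ Finset.univ.filter (fun f : Fin n → Fin N =>
              ∀ j k : Fin n, j < k → sameBlock π j k → f j ≤ f k),
              ∏ j, MvPolynomial.X (f j) = ∏ i, hPoly N (b i) := by
          have hiff : ∀ f : Fin n → Fin N,
              (∀ j k : Fin n, j < k → sameBlock π j k → f j ≤ f k) ↔
                (∀ j k : Fin n, j < k → φ j = φ k → f j ≤ f k) := by
            intro f
            constructor
            · intro hf j k h1 h2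
              exact hf j k h1 ((hsame j k).mpr h2)
            · intro hf j k h1 h2
              exact hf j k h1 ((hsame j k).mp h2)
          rw [Finset.filter_congr fun f _ => hiff f, sum_blockMonotone N n l φ]
          exact Finset.prod_congr rfl fun i _ => by rw [hcard]
        rw [hc, hs]

lemma list_sum_get (L : List ℕ) : ∑ i, L.get i = L.sum := by
  conv_rhs => rw [← List.ofFn_get L]
  rw [List.sum_ofFn]

lemma sum_getD_eq (mu : List ℕ) (m : ℕ) (h : mu.length ≤ m) :
    ∑ i : Fin m, mu.getD (i : ℕ) 0 = mu.sum := by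
  rw [Fin.sum_univ_eq_sum_range (fun i => mu.getD i 0) m]
  rw [← Finset.sum_subset (Finset.range_subset_range.mpr h)
    (fun x _ hx => List.getD_eq_default _ _
      (le_of_not_gt fun hc => hx (Finset.mem_range.mpr hc)))]
  rw [← Fin.sum_univ_eq_sum_range (fun i => mu.getD i 0) mu.length]
  rw [← list_sum_get mu]
  exact Finset.sum_congr rfl fun i _ => by
    rw [List.getD_eq_getElem _ _ i.isLt, List.get_eq_getElem]

end Aux

/-- For every permutation `δ` of `[n]`, `ρ(s_{(δ, λ/μ)}) = s_{λ/μ}`. -/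
theorem rho_skew_schur (N n : ℕ) (hN : 0 < N) (lam mu : List ℕ)
    (hlam : IsPartitionList lam) (hmu : IsPartitionList mu)
    (hlen : mu.length ≤ lam.length) (hle : ∀ i, mu.getD i 0 ≤ lam.getD i 0)
    (hsum : lam.sum = mu.sum + n) (hn : 1 ≤ n) (δ : Equiv.Perm (Fin n)) :
    rho N (sNC N n (⇑δ) lam mu) = schurPoly N lam mu := by
  classical
  rw [schurPoly, ← Matrix.det_transpose, Matrix.det_apply, sNC, map_sum]
  simp only [Matrix.transpose_apply, Matrix.of_apply]
  refine Finset.sum_congr rfl fun ε _ => ?_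
  rw [apply_ite (rho N), map_zero]
  by_cases hpos : ∀ i, 0 ≤ betaInt lam mu ε i
  · rw [if_pos hpos]
    have h1 : ∀ i, ((betaInt lam mu ε i).toNat : ℤ) = betaInt lam mu ε i :=
      fun i => Int.toNat_of_nonneg (hpos i)
    have hbsum : ∑ i, (betaInt lam mu ε i).toNat = n := by
      have h2 : ((∑ i, (betaInt lam mu ε i).toNat : ℕ) : ℤ) = (n : ℤ) := by
        push_cast
        rw [Finset.sum_congr rfl fun i _ => h1 i]
        unfold betaInt
        rw [Finset.sum_sub_distrib, Finset.sum_add_distrib, Finset.sum_sub_distrib,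
          Equiv.sum_comp ε (fun i : Fin lam.length => ((mu.getD (i : ℕ) 0 : ℕ) : ℤ)),
          Equiv.sum_comp ε (fun i : Fin lam.length => ((i : ℕ) : ℤ))]
        have hL : ∑ i : Fin lam.length, ((lam.get i : ℕ) : ℤ) = ((lam.sum : ℕ) : ℤ) := by
          rw [← Nat.cast_sum]
          exact_mod_cast congrArg (fun t : ℕ => (t : ℤ)) (list_sum_get lam)
        have hM : ∑ i : Fin lam.length, ((mu.getD (i : ℕ) 0 : ℕ) : ℤ) = ((mu.sum : ℕ) : ℤ) := by
          rw [← Nat.cast_sum]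
          exact_mod_cast congrArg (fun t : ℕ => (t : ℤ)) (sum_getD_eq mu lam.length hlen)
        rw [hL, hM, hsum]
        push_cast
        ring
      exact_mod_cast h2
    rw [map_smul, rho_hNC N n lam.length (fun i => (betaInt lam mu ε i).toNat) hbsum δ]
    simp only [← Nat.cast_smul_eq_nsmul ℚ]
    rw [smul_smul, Units.smul_def, ← Int.cast_smul_eq_zsmul ℚ]
    have hP : ∏ i, hPoly N ((((betaInt lam mu ε i).toNat : ℕ)) : ℤ)
        = ∏ x : Fin lam.length, hPoly N ((lam.get x : ℤ) - (mu.getD ((ε x : ℕ)) 0 : ℤ)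
            - ((x : ℕ) : ℤ) + ((ε x : ℕ) : ℤ)) := by
      refine Finset.prod_congr rfl fun i _ => ?_
      rw [h1 i]
      congr 1
      simp only [betaInt]
      ring
    rw [hP]
    congr 1
    rw [Nat.cast_prod, mul_assoc, ← Finset.prod_mul_distrib]
    have hone : ∀ i : Fin lam.length, i ∈ Finset.univ →
        (1 / ((betaInt lam mu ε i).toNat.factorial : ℚ)) *
          ((betaInt lam mu ε i).toNat.factorial : ℚ) = 1 := fun i _ =>
      one_div_mul_cancel (by exact_mod_cast Nat.factorial_ne_zero _)
    rw [Finset.prod_congr rfl hone, Finset.prod_const_one, mul_one]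
  · rw [if_neg hpos]
    push_neg at hpos
    obtain ⟨i, hi⟩ := hpos
    have hz : ∏ x : Fin lam.length, hPoly N ((lam.get x : ℤ) - (mu.getD ((ε x : ℕ)) 0 : ℤ)
        - ((x : ℕ) : ℤ) + ((ε x : ℕ) : ℤ)) = 0 := by
      refine Finset.prod_eq_zero (Finset.mem_univ i) ?_
      rw [hPoly, if_neg (by simp only [betaInt] at hi; omega)]
    rw [hz, smul_zero]

end NCSymPaper
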